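/- arXiv:2104.08005 — 5 statements merged into one kernel-verified Lean document; each statement's English description precedes it below -/
import Mathlib

section
/- (Synchrony for the SUM model, sufficiency) Let an n-gene GRN have activation and repression weight matrices W⁺ = (w⁺ᵢⱼ) and W⁻ = (w⁻ᵢⱼ), internal dynamics matrices Aᵢ, and SUM-model dynamics ẋᵢ = Aᵢxᵢ + (Σⱼ w⁻ᵢⱼ rep(pⱼ) + Σⱼ w⁺ᵢⱼ act(pⱼ))·e₁, where xᵢ = (mᵢ, pᵢ) ∈ ℝ². Let P be a partition of {1,…,n} into classes C₁,…,Cₘ such that Aᵢ = Aₗ whenever i and l are in the same class, and for every class C and every k, the sums Σ_{j∈Cₖ} w⁺ᵢⱼ and Σ_{j∈Cₖ} w⁻ᵢⱼ are constant for i ∈ C. Then the polydiagonal Δ_P = {x ∈ (ℝ²)ⁿ : xᵢ = xₗ whenever i, l lie in the same class of P} is invariant under the SUM vector field: if x ∈ Δ_P then the vector field evaluated at x lies in the tangent space of Δ_P (i.e., the i-th and l-th components of the vector field are equal whenever i, l are in the same class). -/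
lemma sum_eq_of_partial_row_sums (n m : ℕ) (g : ℝ → ℝ)
    (W : Fin n → Fin n → ℝ) (P : Fin n → Fin m)
    (i l : Fin n)
    (h : ∀ k, (∑ j ∈ Finset.univ.filter (fun j => P j = k), W i j) =
      (∑ j ∈ Finset.univ.filter (fun j => P j = k), W l j))
    (x : Fin n → Fin 2 → ℝ) (hx : ∀ a b, P a = P b → x a = x b) :
    (∑ j, W i j * g (x j 1)) = (∑ j, W l j * g (x j 1)) := by
  have key : ∀ r : Fin n,
      (∑ j, W r j * g (x j 1)) =
      ∑ k, ∑ j ∈ Finset.univ.filter (fun j => P j = k), W r j * g (x j 1) := by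
    intro r
    exact (Finset.sum_fiberwise Finset.univ P (fun j => W r j * g (x j 1))).symm
  rw [key i, key l]
  refine Finset.sum_congr rfl fun k _ => ?_
  rcases (Finset.univ.filter (fun j => P j = k)).eq_empty_or_nonempty with he | ⟨j0, hj0⟩
  · simp [he]
  · have hj0' : P j0 = k := (Finset.mem_filter.mp hj0).2
    have hconst : ∀ r : Fin n,
        (∑ j ∈ Finset.univ.filter (fun j => P j = k), W r j * g (x j 1)) =
        (∑ j ∈ Finset.univ.filter (fun j => P j = k), W r j) * g (x j0 1) := by
      intro r
      rw [Finset.sum_mul]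
      refine Finset.sum_congr rfl fun j hj => ?_
      have : x j = x j0 := hx j j0 (by rw [(Finset.mem_filter.mp hj).2, hj0'])
      rw [this]
    rw [hconst i, hconst l, h k]

/-- Synchrony for the SUM model: sufficiency of constant partial row sums. -/
theorem sum_model_synchrony_sufficient
    (n m : ℕ) (act rep : ℝ → ℝ)
    (A : Fin n → Matrix (Fin 2) (Fin 2) ℝ)
    (Wp Wm : Fin n → Fin n → ℝ)
    (hWp : ∀ i j, 0 ≤ Wp i j) (hWm : ∀ i j, 0 ≤ Wm i j)
    (e₁ : Fin 2 → ℝ) (he₁ : e₁ = ![1, 0])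
    (F : (Fin n → Fin 2 → ℝ) → Fin n → Fin 2 → ℝ)
    (hF : ∀ x i, F x i =
      (A i).mulVec (x i) +
        ((∑ j, Wm i j * rep (x j 1)) + (∑ j, Wp i j * act (x j 1))) • e₁)
    (P : Fin n → Fin m)
    (hA : ∀ i l, P i = P l → A i = A l)
    (hp : ∀ i l, P i = P l → ∀ k,
      (∑ j ∈ Finset.univ.filter (fun j => P j = k), Wp i j) =
      (∑ j ∈ Finset.univ.filter (fun j => P j = k), Wp l j))
    (hm : ∀ i l, P i = P l → ∀ k,
      (∑ j ∈ Finset.univ.filter (fun j => P j = k), Wm i j) =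
      (∑ j ∈ Finset.univ.filter (fun j => P j = k), Wm l j)) :
    ∀ x : Fin n → Fin 2 → ℝ, (∀ i l, P i = P l → x i = x l) →
      ∀ i l, P i = P l → F x i = F x l := by
  intro x hx i l hil
  rw [hF, hF, hA i l hil, hx i l hil,
    sum_eq_of_partial_row_sums n m rep Wm P i l (hm i l hil) x hx,
    sum_eq_of_partial_row_sums n m act Wp P i l (hp i l hil) x hx]
end

section
/- A polydiagonal subspace Δ_P ⊆ ℝⁿ associated to a partition P of {1,…,n} is invariant under both matrices W⁺ and W⁻ (i.e., W⁺ Δ_P ⊆ Δ_P and W⁻ Δ_P ⊆ Δ_P) if and only if for every class C of P and every class Cₖ of P, the partial row sums Σ_{j∈Cₖ} w⁺ᵢⱼ and Σ_{j∈Cₖ} w⁻ᵢⱼ are constant for i ranging over C. -/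
private lemma aux_fwd (n m : ℕ) (W : Matrix (Fin n) (Fin n) ℝ) (P : Fin n → Fin m)
    (h : ∀ v : Fin n → ℝ, (∀ i l, P i = P l → v i = v l) →
        (∀ i l, P i = P l → W.mulVec v i = W.mulVec v l))
    (i l : Fin n) (hil : P i = P l) (k : Fin m) :
    (∑ j ∈ Finset.univ.filter (fun j => P j = k), W i j) =
      (∑ j ∈ Finset.univ.filter (fun j => P j = k), W l j) := by
  have hv : ∀ a b : Fin n, P a = P b →
      (if P a = k then (1:ℝ) else 0) = (if P b = k then (1:ℝ) else 0) := by
    intro a b hab; rw [hab]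
  have := h (fun j => if P j = k then (1:ℝ) else 0) hv i l hil
  simpa [Matrix.mulVec, dotProduct, mul_ite, mul_one, mul_zero,
    Finset.sum_filter] using this

private lemma aux_bwd (n m : ℕ) (W : Matrix (Fin n) (Fin n) ℝ) (P : Fin n → Fin m)
    (h : ∀ i l, P i = P l → ∀ k,
      (∑ j ∈ Finset.univ.filter (fun j => P j = k), W i j) =
        (∑ j ∈ Finset.univ.filter (fun j => P j = k), W l j))
    (v : Fin n → ℝ) (hv : ∀ i l, P i = P l → v i = v l)
    (i l : Fin n) (hil : P i = P l) : W.mulVec v i = W.mulVec v l := by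
  have key : ∀ a : Fin n, W.mulVec v a =
      ∑ k : Fin m, ∑ j ∈ Finset.univ.filter (fun j => P j = k), W a j * v j := by
    intro a
    simp only [Matrix.mulVec, dotProduct]
    rw [← Finset.sum_fiberwise (g := P) (f := fun j => W a j * v j)]
  rw [key i, key l]
  refine Finset.sum_congr rfl fun k _ => ?_
  rcases (Finset.univ.filter (fun j => P j = k)).eq_empty_or_nonempty with he | ⟨j0, hj0⟩
  · simp [he]
  · have hj0k : P j0 = k := (Finset.mem_filter.mp hj0).2
    have eq1 : ∀ a : Fin n, ∑ j ∈ Finset.univ.filter (fun j => P j = k), W a j * v j =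
        (∑ j ∈ Finset.univ.filter (fun j => P j = k), W a j) * v j0 := by
      intro a
      rw [Finset.sum_mul]
      refine Finset.sum_congr rfl fun j hj => ?_
      rw [hv j j0 ((Finset.mem_filter.mp hj).2.trans hj0k.symm)]
    rw [eq1 i, eq1 l, h i l hil k]

/-- A polydiagonal is invariant under both adjacency matrices iff the partial row
sums over each class are constant on each class. -/
theorem polydiagonal_invariant_iff_row_sums
    (n m : ℕ) (Wp Wm : Matrix (Fin n) (Fin n) ℝ)
    (P : Fin n → Fin m) :
    ((∀ v : Fin n → ℝ, (∀ i l, P i = P l → v i = v l) →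
        ((∀ i l, P i = P l → Wp.mulVec v i = Wp.mulVec v l) ∧
         (∀ i l, P i = P l → Wm.mulVec v i = Wm.mulVec v l)))
      ↔
      (∀ i l, P i = P l → ∀ k,
        (∑ j ∈ Finset.univ.filter (fun j => P j = k), Wp i j) =
          (∑ j ∈ Finset.univ.filter (fun j => P j = k), Wp l j) ∧
        (∑ j ∈ Finset.univ.filter (fun j => P j = k), Wm i j) =
          (∑ j ∈ Finset.univ.filter (fun j => P j = k), Wm l j))) := by
  constructor
  · intro h i l hil k
    exact ⟨aux_fwd n m Wp P (fun v hv => (h v hv).1) i l hil k,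
           aux_fwd n m Wm P (fun v hv => (h v hv).2) i l hil k⟩
  · intro h v hv
    exact ⟨aux_bwd n m Wp P (fun i l hil k => (h i l hil k).1) v hv,
           aux_bwd n m Wm P (fun i l hil k => (h i l hil k).2) v hv⟩
end

section
/- (Quotient of the SUM model) Let P be a partition of {1,…,n} into classes C₁,…,Cₘ satisfying the SUM synchrony conditions (partial row sums of W⁺ and W⁻ over each class Cₖ are constant on each class C). Define the m×m matrices Q⁺ and Q⁻ by q⁺_{ck} = Σ_{j∈Cₖ} w⁺ᵢⱼ and q⁻_{ck} = Σ_{j∈Cₖ} w⁻ᵢⱼ for any i ∈ C_c. Then for every x ∈ Δ_P, writing y_c for the common value of xᵢ with i ∈ C_c, the restriction of the n-gene SUM vector field to Δ_P equals the m-gene SUM vector field with weight matrices Q⁺, Q⁻: ẏ_c = A_c y_c + (Σₖ q⁻_{ck} rep(π_k) + Σₖ q⁺_{ck} act(π_k))·e₁, where π_k is the protein coordinate of y_k. -/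
/-- Quotient of the SUM model: the restriction of the SUM vector field to a
synchrony subspace is the SUM vector field of the quotient GRN. -/
theorem sum_model_quotient
    (n m : ℕ) (act rep : ℝ → ℝ)
    (A : Fin n → Matrix (Fin 2) (Fin 2) ℝ)
    (B : Fin m → Matrix (Fin 2) (Fin 2) ℝ)
    (Wp Wm : Fin n → Fin n → ℝ)
    (Qp Qm : Fin m → Fin m → ℝ)
    (e₁ : Fin 2 → ℝ) (he₁ : e₁ = ![1, 0])
    (P : Fin n → Fin m)
    (hA : ∀ i, A i = B (P i))
    (hQp : ∀ i k, (∑ j ∈ Finset.univ.filter (fun j => P j = k), Wp i j) = Qp (P i) k)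
    (hQm : ∀ i k, (∑ j ∈ Finset.univ.filter (fun j => P j = k), Wm i j) = Qm (P i) k) :
    ∀ (x : Fin n → Fin 2 → ℝ) (y : Fin m → Fin 2 → ℝ),
      (∀ i, x i = y (P i)) →
      ∀ i, (A i).mulVec (x i) +
          ((∑ j, Wm i j * rep (x j 1)) + (∑ j, Wp i j * act (x j 1))) • e₁ =
        (B (P i)).mulVec (y (P i)) +
          ((∑ k, Qm (P i) k * rep (y k 1)) + (∑ k, Qp (P i) k * act (y k 1))) • e₁ := by
  intro x y hxy i
  have hrep : (∑ j, Wm i j * rep (x j 1)) = ∑ k, Qm (P i) k * rep (y k 1) := by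
    rw [← Finset.sum_fiberwise (g := P) (f := fun j => Wm i j * rep (x j 1))]
    refine Finset.sum_congr rfl fun k _ => ?_
    rw [← hQm i k, Finset.sum_mul]
    refine Finset.sum_congr rfl fun j hj => ?_
    simp only [Finset.mem_filter] at hj
    rw [hxy j, hj.2]
  have hact : (∑ j, Wp i j * act (x j 1)) = ∑ k, Qp (P i) k * act (y k 1) := by
    rw [← Finset.sum_fiberwise (g := P) (f := fun j => Wp i j * act (x j 1))]
    refine Finset.sum_congr rfl fun k _ => ?_
    rw [← hQp i k, Finset.sum_mul]
    refine Finset.sum_congr rfl fun j hj => ?_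
    simp only [Finset.mem_filter] at hj
    rw [hxy j, hj.2]
  rw [hA i, hxy i, hrep, hact]
end

section
/- (Synchrony for the MULT model, sufficiency) Consider the n-gene MULT model ẋᵢ = Aᵢxᵢ + wᵢ · (∏ⱼ rep(pⱼ)^{m⁻ᵢⱼ}) · (∏ⱼ act(pⱼ)^{m⁺ᵢⱼ})·e₁ with nonnegative-integer multiplicity matrices M⁺ = (m⁺ᵢⱼ), M⁻ = (m⁻ᵢⱼ) and weights wᵢ ∈ ℝ. Let P be a partition into classes C₁,…,Cₘ such that Aᵢ is constant on classes, and for every class C and every k: Σ_{j∈Cₖ} m⁻ᵢⱼ and Σ_{j∈Cₖ} m⁺ᵢⱼ are constant over i ∈ C, and wᵢ is constant over i ∈ C. Then the polydiagonal Δ_P is invariant under the MULT vector field. -/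
/-- Synchrony for the MULT model: sufficiency. -/
theorem mult_model_synchrony_sufficient
    (n m : ℕ) (act rep : ℝ → ℝ)
    (A : Fin n → Matrix (Fin 2) (Fin 2) ℝ)
    (Mp Mm : Fin n → Fin n → ℕ)
    (w : Fin n → ℝ)
    (e₁ : Fin 2 → ℝ) (he₁ : e₁ = ![1, 0])
    (F : (Fin n → Fin 2 → ℝ) → Fin n → Fin 2 → ℝ)
    (hF : ∀ x i, F x i =
      (A i).mulVec (x i) +
        (w i * ∏ j, rep (x j 1) ^ (Mm i j) * act (x j 1) ^ (Mp i j)) • e₁)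
    (P : Fin n → Fin m)
    (hA : ∀ i l, P i = P l → A i = A l)
    (hMm : ∀ i l, P i = P l → ∀ k,
      (∑ j ∈ Finset.univ.filter (fun j => P j = k), Mm i j) =
      (∑ j ∈ Finset.univ.filter (fun j => P j = k), Mm l j))
    (hMp : ∀ i l, P i = P l → ∀ k,
      (∑ j ∈ Finset.univ.filter (fun j => P j = k), Mp i j) =
      (∑ j ∈ Finset.univ.filter (fun j => P j = k), Mp l j))
    (hw : ∀ i l, P i = P l → w i = w l) :
    ∀ x : Fin n → Fin 2 → ℝ, (∀ i l, P i = P l → x i = x l) →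
      ∀ i l, P i = P l → F x i = F x l := by
  intro x hx i l hil
  have hfiber : ∀ i' : Fin n,
      (∏ j, rep (x j 1) ^ (Mm i' j) * act (x j 1) ^ (Mp i' j)) =
      ∏ k : Fin m, ∏ j ∈ Finset.univ.filter (fun j => P j = k),
        rep (x j 1) ^ (Mm i' j) * act (x j 1) ^ (Mp i' j) := by
    intro i'
    exact (Finset.prod_fiberwise_of_maps_to (fun j _ => Finset.mem_univ (P j)) _).symm
  have hprod : (∏ j, rep (x j 1) ^ (Mm i j) * act (x j 1) ^ (Mp i j)) =
      ∏ j, rep (x j 1) ^ (Mm l j) * act (x j 1) ^ (Mp l j) := by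
    rw [hfiber i, hfiber l]
    refine Finset.prod_congr rfl (fun k _ => ?_)
    rcases (Finset.univ.filter (fun j => P j = k)).eq_empty_or_nonempty with h | ⟨j0, hj0⟩
    · simp [h]
    · have hj0' : P j0 = k := (Finset.mem_filter.mp hj0).2
      have hxj : ∀ j ∈ Finset.univ.filter (fun j => P j = k), x j 1 = x j0 1 := by
        intro j hj
        have : P j = P j0 := by rw [(Finset.mem_filter.mp hj).2, hj0']
        rw [hx j j0 this]
      have key : ∀ i' : Fin n,
          (∏ j ∈ Finset.univ.filter (fun j => P j = k),
            rep (x j 1) ^ (Mm i' j) * act (x j 1) ^ (Mp i' j)) =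
          rep (x j0 1) ^ (∑ j ∈ Finset.univ.filter (fun j => P j = k), Mm i' j) *
          act (x j0 1) ^ (∑ j ∈ Finset.univ.filter (fun j => P j = k), Mp i' j) := by
        intro i'
        rw [Finset.prod_mul_distrib, ← Finset.prod_pow_eq_pow_sum,
          ← Finset.prod_pow_eq_pow_sum]
        congr 1
        · exact Finset.prod_congr rfl (fun j hj => by rw [hxj j hj])
        · exact Finset.prod_congr rfl (fun j hj => by rw [hxj j hj])
      rw [key i, key l, hMm i l hil k, hMp i l hil k]
  have hxil : x i = x l := hx i l hil
  rw [hF, hF, hA i l hil, hw i l hil, hprod, hxil]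
end

section
/- (Algebraic core of MULT necessity) Let act, rep : ℝ>0 → (0,1) be strictly monotone with act(p)→0, rep(p)→1 as p→0⁺ and act(p)→1, rep(p)→0 as p→∞. If w₁, w₂ are positive reals and M₁, N₁, M₂, N₂ natural numbers with w₁ · rep(p)^{M₁} · act(p)^{N₁} = w₂ · rep(p)^{M₂} · act(p)^{N₂} for all p > 0, then M₁ = M₂, N₁ = N₂ and w₁ = w₂. -/
open Filter Topology

lemma auxN (act rep : ℝ → ℝ)
    (hact_mem : ∀ p : ℝ, 0 < p → act p ∈ Set.Ioo (0:ℝ) 1)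
    (hact0 : Tendsto act (𝓝[>] (0:ℝ)) (𝓝 0))
    (hrep0 : Tendsto rep (𝓝[>] (0:ℝ)) (𝓝 1))
    (w₁ w₂ : ℝ) (hw₁ : 0 < w₁)
    (M₁ N₁ M₂ N₂ : ℕ)
    (h : ∀ p : ℝ, 0 < p → w₁ * rep p ^ M₁ * act p ^ N₁ = w₂ * rep p ^ M₂ * act p ^ N₂) :
    N₂ ≤ N₁ := by
  by_contra hlt
  push_neg at hlt
  have heq : ∀ p : ℝ, 0 < p →
      w₁ * rep p ^ M₁ = w₂ * rep p ^ M₂ * act p ^ (N₂ - N₁) := by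
    intro p hp
    have ha : act p ^ N₁ ≠ 0 := pow_ne_zero _ (ne_of_gt (hact_mem p hp).1)
    apply mul_right_cancel₀ ha
    calc w₁ * rep p ^ M₁ * act p ^ N₁ = w₂ * rep p ^ M₂ * act p ^ N₂ := h p hp
      _ = w₂ * rep p ^ M₂ * act p ^ (N₂ - N₁) * act p ^ N₁ := by
          rw [mul_assoc (w₂ * rep p ^ M₂), ← pow_add, Nat.sub_add_cancel hlt.le]
  have h1 : Tendsto (fun p => w₁ * rep p ^ M₁) (𝓝[>] (0:ℝ)) (𝓝 (w₁ * 1 ^ M₁)) :=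
    tendsto_const_nhds.mul (hrep0.pow M₁)
  have h2 : Tendsto (fun p => w₂ * rep p ^ M₂ * act p ^ (N₂ - N₁)) (𝓝[>] (0:ℝ))
      (𝓝 (w₂ * 1 ^ M₂ * 0 ^ (N₂ - N₁))) :=
    (tendsto_const_nhds.mul (hrep0.pow M₂)).mul (hact0.pow (N₂ - N₁))
  have hcongr : (fun p => w₁ * rep p ^ M₁) =ᶠ[𝓝[>] (0:ℝ)]
      (fun p => w₂ * rep p ^ M₂ * act p ^ (N₂ - N₁)) := by
    filter_upwards [self_mem_nhdsWithin] with p hp using heq p hp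
  have := tendsto_nhds_unique (h1.congr' hcongr) h2
  rw [zero_pow (by omega), one_pow, one_pow] at this
  simp at this
  linarith

lemma auxM (act rep : ℝ → ℝ)
    (hrep_mem : ∀ p : ℝ, 0 < p → rep p ∈ Set.Ioo (0:ℝ) 1)
    (hactInf : Tendsto act atTop (𝓝 1))
    (hrepInf : Tendsto rep atTop (𝓝 0))
    (w₁ w₂ : ℝ) (hw₁ : 0 < w₁)
    (M₁ N₁ M₂ N₂ : ℕ)
    (h : ∀ p : ℝ, 0 < p → w₁ * rep p ^ M₁ * act p ^ N₁ = w₂ * rep p ^ M₂ * act p ^ N₂) :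
    M₂ ≤ M₁ := by
  by_contra hlt
  push_neg at hlt
  have heq : ∀ p : ℝ, 0 < p →
      w₁ * act p ^ N₁ = w₂ * rep p ^ (M₂ - M₁) * act p ^ N₂ := by
    intro p hp
    have hr : rep p ^ M₁ ≠ 0 := pow_ne_zero _ (ne_of_gt (hrep_mem p hp).1)
    apply mul_right_cancel₀ hr
    calc w₁ * act p ^ N₁ * rep p ^ M₁ = w₁ * rep p ^ M₁ * act p ^ N₁ := by ring
      _ = w₂ * rep p ^ M₂ * act p ^ N₂ := h p hp
      _ = w₂ * rep p ^ ((M₂ - M₁) + M₁) * act p ^ N₂ := by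
          rw [Nat.sub_add_cancel hlt.le]
      _ = w₂ * rep p ^ (M₂ - M₁) * act p ^ N₂ * rep p ^ M₁ := by
          rw [pow_add]; ring
  have h1 : Tendsto (fun p => w₁ * act p ^ N₁) atTop (𝓝 (w₁ * 1 ^ N₁)) :=
    tendsto_const_nhds.mul (hactInf.pow N₁)
  have h2 : Tendsto (fun p => w₂ * rep p ^ (M₂ - M₁) * act p ^ N₂) atTop
      (𝓝 (w₂ * 0 ^ (M₂ - M₁) * 1 ^ N₂)) :=
    (tendsto_const_nhds.mul (hrepInf.pow (M₂ - M₁))).mul (hactInf.pow N₂)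
  have hcongr : (fun p => w₁ * act p ^ N₁) =ᶠ[atTop]
      (fun p => w₂ * rep p ^ (M₂ - M₁) * act p ^ N₂) := by
    filter_upwards [eventually_gt_atTop 0] with p hp using heq p hp
  have := tendsto_nhds_unique (h1.congr' hcongr) h2
  rw [zero_pow (by omega), one_pow, one_pow] at this
  simp at this
  linarith

/-- Algebraic core of MULT necessity. -/
theorem mult_model_weights_determined (act rep : ℝ → ℝ)
    (hact_mem : ∀ p : ℝ, 0 < p → act p ∈ Set.Ioo (0:ℝ) 1)
    (hrep_mem : ∀ p : ℝ, 0 < p → rep p ∈ Set.Ioo (0:ℝ) 1)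
    (hact_mono : StrictMonoOn act (Set.Ioi 0))
    (hrep_anti : StrictAntiOn rep (Set.Ioi 0))
    (hact0 : Tendsto act (𝓝[>] (0:ℝ)) (𝓝 0))
    (hrep0 : Tendsto rep (𝓝[>] (0:ℝ)) (𝓝 1))
    (hactInf : Tendsto act atTop (𝓝 1))
    (hrepInf : Tendsto rep atTop (𝓝 0))
    (w₁ w₂ : ℝ) (hw₁ : 0 < w₁) (hw₂ : 0 < w₂)
    (M₁ N₁ M₂ N₂ : ℕ)
    (h : ∀ p : ℝ, 0 < p → w₁ * rep p ^ M₁ * act p ^ N₁ = w₂ * rep p ^ M₂ * act p ^ N₂) :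
    M₁ = M₂ ∧ N₁ = N₂ ∧ w₁ = w₂ := by
  have h' : ∀ p : ℝ, 0 < p → w₂ * rep p ^ M₂ * act p ^ N₂ = w₁ * rep p ^ M₁ * act p ^ N₁ :=
    fun p hp => (h p hp).symm
  have hN : N₁ = N₂ :=
    le_antisymm (auxN act rep hact_mem hact0 hrep0 w₂ w₁ hw₂ M₂ N₂ M₁ N₁ h')
      (auxN act rep hact_mem hact0 hrep0 w₁ w₂ hw₁ M₁ N₁ M₂ N₂ h)
  have hM : M₁ = M₂ :=
    le_antisymm (auxM act rep hrep_mem hactInf hrepInf w₂ w₁ hw₂ M₂ N₂ M₁ N₁ h')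
      (auxM act rep hrep_mem hactInf hrepInf w₁ w₂ hw₁ M₁ N₁ M₂ N₂ h)
  refine ⟨hM, hN, ?_⟩
  have h1 := h 1 one_pos
  rw [hM, hN] at h1
  have hr : rep 1 ^ M₂ ≠ 0 := pow_ne_zero _ (ne_of_gt (hrep_mem 1 one_pos).1)
  have ha : act 1 ^ N₂ ≠ 0 := pow_ne_zero _ (ne_of_gt (hact_mem 1 one_pos).1)
  exact mul_right_cancel₀ hr (mul_right_cancel₀ ha h1)
end
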